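/- Let r ∈ |F^×| and let f_1, f_2, W ∈ A^{m−1}(r)[z_m] be such that W = f_1·f_2 and W is a Weierstrass polynomial. Then there exist units u_1, u_2 of A^{m−1}(r) such that f_1/u_1 and f_2/u_2 are Weierstrass polynomials. -/

import Mathlib

open MvPowerSeries Filter

set_option linter.unusedSectionVars false

namespace NA

variable (F : Type) [NormedField F] [IsUltrametricDist F]

/-- The value group `|F^×|` of a normed field, as a set of real numbers. -/
def VG : Set ℝ := {r | ∃ c : F, c ≠ 0 ∧ ‖c‖ = r}

lemma VG.pos {r : ℝ} (hr : r ∈ VG F) : 0 < r := by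
  obtain ⟨c, hc, rfl⟩ := hr
  exact norm_pos_iff.mpr hc

/-- The total degree `|γ|` of a multi-index. -/
def mdeg {m : ℕ} (γ : Fin m →₀ ℕ) : ℕ := γ.sum fun _ n => n

lemma mdeg_add {m : ℕ} (α β : Fin m →₀ ℕ) : mdeg (α + β) = mdeg α + mdeg β :=
  Finsupp.sum_add_index' (fun _ => rfl) (fun _ _ _ => rfl)

/-- The ring `A^m(r)` of power series converging on the closed ball of radius `r`:
those `f = Σ a_γ z^γ` with `|a_γ| r^{|γ|} → 0` as `|γ| → ∞`. -/
def A (m : ℕ) (r : ℝ) : Subring (MvPowerSeries (Fin m) F) where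
  carrier := {f | Tendsto (fun γ : Fin m →₀ ℕ => ‖coeff γ f‖ * r ^ mdeg γ)
    cofinite (nhds 0)}
  zero_mem' := by
    simp only [Set.mem_setOf_eq, map_zero, norm_zero, zero_mul]
    exact tendsto_const_nhds
  one_mem' := by
    refine tendsto_const_nhds.congr' ?_
    refine Filter.eventuallyEq_of_mem ((Set.finite_singleton (0 : Fin m →₀ ℕ)).compl_mem_cofinite) ?_
    intro γ hγ
    have : (γ : Fin m →₀ ℕ) ≠ 0 := by simpa using hγ
    simp [MvPowerSeries.coeff_one, this]
  add_mem' := by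
    intro f g hf hg
    simp only [Set.mem_setOf_eq] at hf hg ⊢
    rw [tendsto_zero_iff_abs_tendsto_zero] at hf hg ⊢
    refine squeeze_zero (fun γ => abs_nonneg _) (fun γ => ?_) (by simpa using hf.add hg)
    simp only [Function.comp_apply, abs_mul, abs_norm, abs_pow, map_add, ← add_mul]
    exact mul_le_mul_of_nonneg_right (norm_add_le _ _) (by positivity)
  neg_mem' := by
    intro f hf
    simpa only [Set.mem_setOf_eq, map_neg, norm_neg] using hf
  mul_mem' := by
    intro f g hf hg
    simp only [Set.mem_setOf_eq] at hf hg ⊢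
    rw [tendsto_zero_iff_abs_tendsto_zero] at hf hg ⊢
    have habs : ∀ (h : MvPowerSeries (Fin m) F),
        (abs ∘ fun γ : Fin m →₀ ℕ => ‖coeff γ h‖ * r ^ mdeg γ)
          = fun γ => ‖coeff γ h‖ * |r| ^ mdeg γ := by
      intro h; funext γ
      simp [Function.comp_apply, abs_mul, abs_pow]
    rw [habs] at hf hg ⊢
    set v := fun (h : MvPowerSeries (Fin m) F) (γ : Fin m →₀ ℕ) =>
      ‖coeff γ h‖ * |r| ^ mdeg γ with hv
    have vnonneg : ∀ h γ, 0 ≤ v h γ := fun h γ => by positivity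
    have finlt : ∀ (h : MvPowerSeries (Fin m) F),
        Tendsto (v h) cofinite (nhds 0) → ∀ δ : ℝ, 0 < δ → {γ | ¬ v h γ < δ}.Finite := by
      intro h hh δ hδ
      have := (Metric.tendsto_nhds.mp hh) δ hδ
      rw [Filter.eventually_cofinite] at this
      refine this.subset ?_
      intro γ hγ
      simp only [Set.mem_setOf_eq, Real.dist_eq, sub_zero] at *
      intro hc; exact hγ (lt_of_abs_lt hc)
    have bound : ∀ (h : MvPowerSeries (Fin m) F),
        Tendsto (v h) cofinite (nhds 0) → ∃ M : ℝ, 1 ≤ M ∧ ∀ γ, v h γ ≤ M := by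
      intro h hh
      have h1 := finlt h hh 1 one_pos
      refine ⟨1 + ∑ γ ∈ h1.toFinset, v h γ,
        le_add_of_nonneg_right (Finset.sum_nonneg fun γ _ => vnonneg h γ), ?_⟩
      intro γ
      by_cases hγ : γ ∈ h1.toFinset
      · have := Finset.single_le_sum (f := v h) (fun γ _ => vnonneg h γ) hγ
        linarith
      · simp only [Set.Finite.mem_toFinset, Set.mem_setOf_eq, not_not] at hγ
        have hs : (0:ℝ) ≤ ∑ γ ∈ h1.toFinset, v h γ :=
          Finset.sum_nonneg fun γ _ => vnonneg h γ
        linarith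
    rw [Metric.tendsto_nhds]
    intro ε hε
    rw [Filter.eventually_cofinite]
    obtain ⟨Mf, hMf1, hMf⟩ := bound f hf
    obtain ⟨Mg, hMg1, hMg⟩ := bound g hg
    set M := max Mf Mg with hMdef
    have hM1 : (1:ℝ) ≤ M := le_trans hMf1 (le_max_left _ _)
    have hM0 : (0:ℝ) < M := lt_of_lt_of_le one_pos hM1
    set δ := ε / M with hδdef
    have hδ0 : 0 < δ := div_pos hε hM0
    have hSf := finlt f hf δ hδ0
    have hSg := finlt g hg δ hδ0
    refine ((hSf.prod hSg).image
      (fun p : (Fin m →₀ ℕ) × (Fin m →₀ ℕ) => p.1 + p.2)).subset ?_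
    intro γ hγ
    simp only [Set.mem_setOf_eq, Real.dist_eq, sub_zero] at hγ
    have hγ' : ε ≤ v (f * g) γ := by
      rw [abs_of_nonneg (vnonneg (f*g) γ)] at hγ
      exact not_lt.mp hγ
    have hne : (Finset.HasAntidiagonal.antidiagonal γ).Nonempty := ⟨(γ, 0), by simp⟩
    obtain ⟨p, hp, hple⟩ := IsUltrametricDist.exists_norm_finset_sum_le_of_nonempty hne
      (fun p : (Fin m →₀ ℕ) × (Fin m →₀ ℕ) => coeff p.1 f * coeff p.2 g)
    have hpsum : p.1 + p.2 = γ := Finset.HasAntidiagonal.mem_antidiagonal.mp hp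
    have key : v (f * g) γ ≤ v f p.1 * v g p.2 := by
      have hdeg : mdeg γ = mdeg p.1 + mdeg p.2 := by
        rw [← hpsum, mdeg_add]
      calc v (f * g) γ = ‖coeff γ (f * g)‖ * |r| ^ mdeg γ := rfl
        _ ≤ ‖coeff p.1 f * coeff p.2 g‖ * |r| ^ mdeg γ := by
            refine mul_le_mul_of_nonneg_right ?_ (by positivity)
            rw [MvPowerSeries.coeff_mul]
            exact hple
        _ = (‖coeff p.1 f‖ * |r| ^ mdeg p.1) * (‖coeff p.2 g‖ * |r| ^ mdeg p.2) := by
            rw [norm_mul, hdeg, pow_add]; ring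
    refine ⟨p, ⟨?_, ?_⟩, hpsum⟩
    · simp only [Set.mem_setOf_eq, not_lt]
      have h1 : ε ≤ v f p.1 * M := by
        refine hγ'.trans (key.trans ?_)
        exact mul_le_mul_of_nonneg_left ((hMg p.2).trans (le_max_right _ _)) (vnonneg f p.1)
      exact (div_le_iff₀ hM0).mpr h1
    · simp only [Set.mem_setOf_eq, not_lt]
      have h1 : ε ≤ M * v g p.2 := by
        refine hγ'.trans (key.trans ?_)
        exact mul_le_mul_of_nonneg_right ((hMf p.1).trans (le_max_left _ _)) (vnonneg g p.2)
      rw [hδdef, div_le_iff₀' hM0]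
      exact h1

lemma mem_A_iff {m : ℕ} {r : ℝ} {f : MvPowerSeries (Fin m) F} :
    f ∈ A F m r ↔ Tendsto (fun γ : Fin m →₀ ℕ => ‖coeff γ f‖ * r ^ mdeg γ)
      cofinite (nhds 0) := Iff.rfl

instance {m : ℕ} : IsDomain (MvPowerSeries (Fin m) F) :=
  NoZeroDivisors.to_isDomain _

/-- The Gauss norm `|f|_r = sup_γ |a_γ| r^{|γ|}`. -/
noncomputable def nrm (r : ℝ) {m : ℕ} (f : MvPowerSeries (Fin m) F) : ℝ :=
  ⨆ γ : Fin m →₀ ℕ, ‖coeff γ f‖ * r ^ mdeg γ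

/-- For `0 < r ≤ R`, `A^m(R) ⊆ A^m(r)`. -/
lemma A_mono {m : ℕ} {r R : ℝ} (h0 : 0 < r) (hrR : r ≤ R) : A F m R ≤ A F m r := by
  intro f hf
  rw [mem_A_iff] at hf ⊢
  refine squeeze_zero (fun γ => by positivity) (fun γ => ?_) hf
  exact mul_le_mul_of_nonneg_left (pow_le_pow_left₀ h0.le hrR _) (norm_nonneg _)

/-- Evaluation of a power series at a point, as a (possibly junk) sum. -/
noncomputable def eval {m : ℕ} (f : MvPowerSeries (Fin m) F) (z : Fin m → F) : F :=
  ∑' γ : Fin m →₀ ℕ, coeff γ f * ∏ i, z i ^ (γ i)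

/-- The ring of integers `{a : |a| ≤ 1}` of `F`. -/
def O : Subring F where
  carrier := {a | ‖a‖ ≤ 1}
  zero_mem' := by simp
  one_mem' := by simp
  add_mem' := by
    intro a b ha hb
    exact (IsUltrametricDist.norm_add_le_max a b).trans (max_le ha hb)
  neg_mem' := by intro a ha; simpa using ha
  mul_mem' := by
    intro a b ha hb
    rw [Set.mem_setOf_eq, norm_mul]
    exact mul_le_one₀ ha (norm_nonneg b) hb

/-- The maximal ideal `{a : |a| < 1}` of the ring of integers. -/
def mIdeal : Ideal (O F) where
  carrier := {a | ‖(a : F)‖ < 1}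
  zero_mem' := by simp
  add_mem' := by
    intro a b ha hb
    exact lt_of_le_of_lt (IsUltrametricDist.norm_add_le_max (a : F) b) (max_lt ha hb)
  smul_mem' := by
    intro c a ha
    simp only [Set.mem_setOf_eq, smul_eq_mul] at ha ⊢
    rw [Subring.coe_mul, norm_mul]
    exact mul_lt_one_of_nonneg_of_lt_one_right c.2 (norm_nonneg _) ha

/-- The residue class field of `F`. -/
def Res := O F ⧸ mIdeal F

noncomputable instance : CommRing (Res F) := by unfold Res; infer_instance

/-- Reduction of an element of absolute value at most `1` to the residue field. -/
noncomputable def red (a : F) (h : ‖a‖ ≤ 1) : Res F :=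
  Ideal.Quotient.mk (mIdeal F) ⟨a, h⟩

/-- The ring of entire functions on `F^m`: power series lying in every `A^m(r)`. -/
def Ent (m : ℕ) : Subring (MvPowerSeries (Fin m) F) where
  carrier := {f | ∀ r ∈ VG F, f ∈ A F m r}
  zero_mem' := fun r _ => (A F m r).zero_mem
  one_mem' := fun r _ => (A F m r).one_mem
  add_mem' := fun hf hg r hr => (A F m r).add_mem (hf r hr) (hg r hr)
  neg_mem' := fun hf r hr => (A F m r).neg_mem (hf r hr)
  mul_mem' := fun hf hg r hr => (A F m r).mul_mem (hf r hr) (hg r hr)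

lemma mem_Ent_iff {m : ℕ} {f : MvPowerSeries (Fin m) F} :
    f ∈ Ent F m ↔ ∀ r ∈ VG F, f ∈ A F m r := Iff.rfl

/-- `d` is a greatest common divisor of the family `s`. -/
def IsGCDOf {α : Type*} [CommRing α] {ι : Type*} (d : α) (s : ι → α) : Prop :=
  (∀ i, d ∣ s i) ∧ ∀ e : α, (∀ i, e ∣ s i) → e ∣ d

section LastVariable

variable (m : ℕ)

/-- The subring of power series in `m+1` variables not depending on the last variable. -/
def indepLast : Subring (MvPowerSeries (Fin (m+1)) F) where
  carrier := {f | ∀ γ : Fin (m+1) →₀ ℕ, γ (Fin.last m) ≠ 0 → coeff γ f = 0}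
  zero_mem' := by intro γ _; simp
  one_mem' := by
    intro γ hγ
    have h : γ ≠ 0 := fun h => hγ (by simp [h])
    simp [MvPowerSeries.coeff_one, h]
  add_mem' := by
    intro f g hf hg γ hγ
    simp [map_add, hf γ hγ, hg γ hγ]
  neg_mem' := by
    intro f hf γ hγ
    simp [hf γ hγ]
  mul_mem' := by
    intro f g hf hg γ hγ
    rw [MvPowerSeries.coeff_mul]
    refine Finset.sum_eq_zero fun p hp => ?_
    have hpsum : p.1 + p.2 = γ := Finset.HasAntidiagonal.mem_antidiagonal.mp hp
    by_cases h1 : p.1 (Fin.last m) = 0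
    · have h2 : p.2 (Fin.last m) ≠ 0 := by
        intro h2
        apply hγ
        rw [← hpsum, Finsupp.add_apply, h1, h2]
      rw [hg p.2 h2, mul_zero]
    · rw [hf p.1 h1, zero_mul]

/-- The ring `A^{m-1}(r)`: analytic functions not depending on the last variable. -/
noncomputable def Aprev (r : ℝ) : Subring (MvPowerSeries (Fin (m+1)) F) :=
  A F (m+1) r ⊓ indepLast F m

lemma Aprev_le (r : ℝ) : Aprev F m r ≤ A F (m+1) r := inf_le_left

lemma X_mem (r : ℝ) {k : ℕ} (i : Fin k) : (X i : MvPowerSeries (Fin k) F) ∈ A F k r := by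
  rw [mem_A_iff]
  refine tendsto_const_nhds.congr' ?_
  refine Filter.eventuallyEq_of_mem
    ((Set.finite_singleton (Finsupp.single i 1)).compl_mem_cofinite) ?_
  intro γ hγ
  have h : γ ≠ Finsupp.single i 1 := by simpa using hγ
  simp [MvPowerSeries.X, MvPowerSeries.coeff_monomial, h]

/-- The last coordinate function `z_m` as an element of `A^m(r)`. -/
noncomputable def zmA (r : ℝ) : A F (m+1) r :=
  ⟨X (Fin.last m), X_mem F r (Fin.last m)⟩

/-- Interpret a polynomial `W ∈ A^{m-1}(r)[z_m]` as an analytic function in `A^m(r)`. -/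
noncomputable def toAm (r : ℝ) (W : Polynomial (Aprev F m r)) : A F (m+1) r :=
  Polynomial.eval₂ (Subring.inclusion (Aprev_le F m r)) (zmA F m r) W

/-- `W ∈ A^{m-1}(r)[z_m]` is a Weierstrass polynomial of degree `n = deg W`:
it is monic and `|W|_r = r^n`. -/
def IsWeierstrass (r : ℝ) (W : Polynomial (Aprev F m r)) : Prop :=
  W.Monic ∧ nrm F r ((toAm F m r W : A F (m+1) r) : MvPowerSeries (Fin (m+1)) F)
    = r ^ W.natDegree

/-- The coefficient `A_j` of `z_m^j` when `f` is written as `Σ_j A_j(z') z_m^j`,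
viewed as a power series not involving the last variable. -/
noncomputable def slice (f : MvPowerSeries (Fin (m+1)) F) (j : ℕ) :
    MvPowerSeries (Fin (m+1)) F :=
  fun γ => if γ (Fin.last m) = 0 then
    coeff (γ + Finsupp.single (Fin.last m) j) f else 0

/-- `f` is `z_m`-distinguished of degree `n` in `A^m(r)`: writing `f = Σ_j A_j z_m^j`,
`A_n` is a unit in `A^{m-1}(r)`, `|f|_r = |A_n|_r r^n`, and `|A_j|_r r^j < |A_n|_r r^n`
for `j > n`. -/
def IsDistinguished (r : ℝ) (f : MvPowerSeries (Fin (m+1)) F) (n : ℕ) : Prop :=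
  (∃ h : slice F m f n ∈ Aprev F m r, IsUnit (⟨slice F m f n, h⟩ : Aprev F m r)) ∧
  nrm F r f = nrm F r (slice F m f n) * r ^ n ∧
  ∀ j : ℕ, n < j → nrm F r (slice F m f j) * r ^ j < nrm F r (slice F m f n) * r ^ n

/-- The linear forms `z_i + u_i z_m` (and `z_m` for `i = m`) defining
the change of variables `σ_u`. -/
noncomputable def linSub (u : Fin m → F) (i : Fin (m+1)) : MvPolynomial (Fin (m+1)) F :=
  MvPolynomial.X i + (if h : (i : ℕ) < m then
    MvPolynomial.C (u ⟨i, h⟩) * MvPolynomial.X (Fin.last m) else 0)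

/-- The composition `f ∘ σ_u`, where
`σ_u(z_1,…,z_m) = (z_1 + u_1 z_m, …, z_{m-1} + u_{m-1} z_m, z_m)`. -/
noncomputable def sigmaSub (u : Fin m → F) (f : MvPowerSeries (Fin (m+1)) F) :
    MvPowerSeries (Fin (m+1)) F :=
  fun δ => ∑ t ∈ Finset.Nat.antidiagonalTuple (m+1) (mdeg δ),
    coeff (Finsupp.equivFunOnFinite.symm t) f *
      MvPolynomial.coeff δ (∏ i, linSub F m u i ^ t i)

end LastVariable

/-- The formal partial derivative `∂f/∂z_j` of a power series. -/
noncomputable def pderiv {m : ℕ} (j : Fin m) (f : MvPowerSeries (Fin m) F) :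
    MvPowerSeries (Fin m) F :=
  fun γ => ((γ j + 1 : ℕ) : F) * coeff (γ + Finsupp.single j 1) f

/-!
After rescaling by the inverse leading coefficient of one factor (a unit, since the product of
the two leading coefficients is `1`), both factors are monic. A monic `g` has `|g|_r ≥ r^{deg g}`,
because the coefficient of `z_m^{deg g}` in `g` is `1`. The Gauss norm satisfies
`|g₁ g₂|_r ≥ |g₁|_r |g₂|_r`: at the sum of the lexicographically first indices where `g₁` and
`g₂` attain their norms, one term of the coefficient of `g₁ g₂` strictly dominates all others.
Hence `r^{deg g₁ + deg g₂} = |W|_r ≥ |g₁|_r |g₂|_r ≥ r^{deg g₁} r^{deg g₂}` forces equality in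
both factors.
-/

lemma _root_.finite_setOf_le_of_tendsto_zero {ι : Type*} {v : ι → ℝ}
    (hv : Tendsto v cofinite (nhds 0)) {ε : ℝ} (hε : 0 < ε) : {i | ε ≤ v i}.Finite := by
  simpa only [not_lt] using Filter.eventually_cofinite.mp (hv.eventually (gt_mem_nhds hε))

lemma _root_.exists_eq_ciSup_of_tendsto_zero {ι : Type*} {v : ι → ℝ}
    (hv : Tendsto v cofinite (nhds 0)) {i₁ : ι} (hi₁ : 0 < v i₁) : ∃ i, v i = ⨆ j, v j := by
  obtain ⟨i, hi, hmax⟩ := Set.exists_max_image _ v (finite_setOf_le_of_tendsto_zero hv hi₁)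
    ⟨i₁, le_refl (v i₁)⟩
  have : Nonempty ι := ⟨i₁⟩
  have hle : ∀ j, v j ≤ v i := fun j =>
    (le_or_gt (v i₁) (v j)).elim (hmax j) fun hj => hj.le.trans hi
  exact ⟨i, (ciSup_eq_of_forall_le_of_forall_lt_exists_gt hle fun _ h => ⟨i, h⟩).symm⟩

lemma _root_.IsUltrametricDist.norm_sum_lt {E ι : Type*} [SeminormedAddCommGroup E]
    [IsUltrametricDist E] {s : Finset ι} {f : ι → E} {C : ℝ} (hC : 0 < C) (h : ∀ i ∈ s, ‖f i‖ < C) :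
    ‖∑ i ∈ s, f i‖ < C := by
  rcases s.eq_empty_or_nonempty with rfl | hs
  · simpa using hC
  · exact (hs.norm_sum_le_sup'_norm f).trans_lt ((Finset.sup'_lt_iff hs).mpr h)

lemma _root_.lt_or_lt_of_add_eq_add_of_ne {M : Type*} [AddCommMonoid M] [LinearOrder M]
    [IsOrderedCancelAddMonoid M] {a b c d : M} (h : a + b = c + d) (hne : (a, b) ≠ (c, d)) :
    a < c ∨ b < d := by
  by_contra! hge
  rcases hge.1.lt_or_eq with hlt | rfl
  · exact (add_lt_add_of_lt_of_le hlt hge.2).ne h.symm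
  · exact hne (by rw [add_left_cancel h])

lemma _root_.Polynomial.exists_unit_monic_of_monic_mul {R : Type*} [CommRing R] [IsDomain R]
    {f₁ f₂ : Polynomial R} (h : (f₁ * f₂).Monic) :
    ∃ u : Rˣ, (Polynomial.C (↑u⁻¹ : R) * f₁).Monic ∧ (Polynomial.C (u : R) * f₂).Monic ∧
      Polynomial.C (↑u⁻¹ : R) * f₁ * (Polynomial.C (u : R) * f₂) = f₁ * f₂ := by
  obtain ⟨u, hu⟩ := h.isUnit_leadingCoeff_of_dvd (dvd_mul_right f₁ f₂)
  refine ⟨u, Polynomial.monic_C_mul_of_mul_leadingCoeff_eq_one (hu ▸ u.inv_mul),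
    Polynomial.monic_C_mul_of_mul_leadingCoeff_eq_one ?_, ?_⟩
  · rw [hu, ← Polynomial.leadingCoeff_mul, h.leadingCoeff]
  · rw [mul_mul_mul_comm, ← Polynomial.C_mul, u.inv_mul, Polynomial.C_1, one_mul]

lemma mdeg_single {m : ℕ} (i : Fin m) (d : ℕ) : mdeg (Finsupp.single i d) = d :=
  Finsupp.sum_single_index rfl

section GaussNorm

variable {m : ℕ} {r : ℝ}

noncomputable def gaussTerm (r : ℝ) (f : MvPowerSeries (Fin m) F) (γ : Fin m →₀ ℕ) : ℝ :=
  ‖coeff γ f‖ * r ^ mdeg γ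

lemma gaussTerm_le_nrm {f : MvPowerSeries (Fin m) F} (hf : f ∈ A F m r) (γ : Fin m →₀ ℕ) :
    gaussTerm F r f γ ≤ nrm F r f :=
  le_ciSup hf.bddAbove_range_of_cofinite γ

lemma gaussTerm_mul_gaussTerm (f g : MvPowerSeries (Fin m) F) (α β : Fin m →₀ ℕ) :
    gaussTerm F r f α * gaussTerm F r g β = ‖coeff α f * coeff β g‖ * r ^ mdeg (α + β) := by
  rw [gaussTerm, gaussTerm, norm_mul, mdeg_add, pow_add]
  ring

lemma exists_gaussTerm_eq_nrm_of_ne_zero (hr : 0 < r) {f : MvPowerSeries (Fin m) F}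
    (hf : f ∈ A F m r) (hf0 : f ≠ 0) :
    ∃ γ₀, gaussTerm F r f γ₀ = nrm F r f ∧ 0 < nrm F r f ∧
      ∀ α, toLex α < toLex γ₀ → gaussTerm F r f α < nrm F r f := by
  obtain ⟨γ₁, hγ₁⟩ : ∃ γ₁, coeff γ₁ f ≠ 0 := by
    by_contra! h
    exact hf0 (MvPowerSeries.ext h)
  have hpos : 0 < gaussTerm F r f γ₁ := by unfold gaussTerm; positivity
  obtain ⟨γ, hγ⟩ := exists_eq_ciSup_of_tendsto_zero hf hpos
  have hnrm : 0 < nrm F r f := hpos.trans_le (gaussTerm_le_nrm F hf γ₁)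
  have hfin : {γ | gaussTerm F r f γ = nrm F r f}.Finite :=
    (finite_setOf_le_of_tendsto_zero hf hnrm).subset fun γ hγ => hγ.ge
  obtain ⟨γ₀, hγ₀, hmin⟩ := Set.exists_min_image _ toLex hfin ⟨γ, hγ⟩
  refine ⟨γ₀, hγ₀, hnrm, fun α hα => (gaussTerm_le_nrm F hf α).lt_of_ne fun h => ?_⟩
  exact (hmin α h).not_gt hα

open Finset.HasAntidiagonal in
lemma nrm_mul_nrm_le_nrm_mul (hr : 0 < r) {f g : MvPowerSeries (Fin m) F}
    (hf : f ∈ A F m r) (hg : g ∈ A F m r) :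
    nrm F r f * nrm F r g ≤ nrm F r (f * g) := by
  have hfg : f * g ∈ A F m r := (A F m r).mul_mem hf hg
  rcases eq_or_ne f 0 with rfl | hf0
  · simp [nrm]
  rcases eq_or_ne g 0 with rfl | hg0
  · simp [nrm]
  obtain ⟨γ₀, hγ₀, hfpos, hγmin⟩ := exists_gaussTerm_eq_nrm_of_ne_zero F hr hf hf0
  obtain ⟨δ₀, hδ₀, hgpos, hδmin⟩ := exists_gaussTerm_eq_nrm_of_ne_zero F hr hg hg0
  have hrD : 0 < r ^ mdeg (γ₀ + δ₀) := pow_pos hr _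
  set t₀ := coeff γ₀ f * coeff δ₀ g
  have hlead : ‖t₀‖ * r ^ mdeg (γ₀ + δ₀) = nrm F r f * nrm F r g := by
    rw [← gaussTerm_mul_gaussTerm, hγ₀, hδ₀]
  have hother : ∀ p ∈ (antidiagonal (γ₀ + δ₀)).erase (γ₀, δ₀),
      ‖coeff p.1 f * coeff p.2 g‖ < ‖t₀‖ := by
    intro p hp
    obtain ⟨hne, hsum⟩ := Finset.mem_erase.mp hp
    rw [mem_antidiagonal] at hsum
    refine lt_of_mul_lt_mul_right (a := r ^ mdeg (γ₀ + δ₀)) ?_ hrD.le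
    rw [hlead, ← hsum, ← gaussTerm_mul_gaussTerm]
    rcases lt_or_lt_of_add_eq_add_of_ne (congrArg toLex hsum)
      fun h => hne (Prod.ext_iff.mpr (Prod.ext_iff.mp h)) with h | h
    · exact mul_lt_mul_of_lt_of_le_of_nonneg_of_pos (hγmin _ h) (gaussTerm_le_nrm F hg _)
        (by unfold gaussTerm; positivity) hgpos
    · exact mul_lt_mul_of_le_of_lt_of_nonneg_of_pos (gaussTerm_le_nrm F hf _) (hδmin _ h)
        (by unfold gaussTerm; positivity) hfpos
  have ht₀ : 0 < ‖t₀‖ := (mul_pos_iff_of_pos_right hrD).mp (hlead ▸ mul_pos hfpos hgpos)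
  have hmem : (γ₀, δ₀) ∈ antidiagonal (γ₀ + δ₀) := mem_antidiagonal.mpr rfl
  have hcoeff : ‖coeff (γ₀ + δ₀) (f * g)‖ = ‖t₀‖ := by
    rw [MvPowerSeries.coeff_mul, ← Finset.add_sum_erase _ _ hmem]
    have hrest := IsUltrametricDist.norm_sum_lt ht₀ hother
    rw [IsUltrametricDist.norm_add_eq_max_of_norm_ne_norm hrest.ne', max_eq_left hrest.le]
  calc nrm F r f * nrm F r g = gaussTerm F r (f * g) (γ₀ + δ₀) := by
        rw [gaussTerm, hcoeff, hlead]
    _ ≤ nrm F r (f * g) := gaussTerm_le_nrm F hfg _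

end GaussNorm

section Weierstrass

variable {m : ℕ} {r : ℝ}

lemma coeff_single_last_mul_X_pow {a : MvPowerSeries (Fin (m+1)) F} (ha : a ∈ indepLast F m)
    (j k : ℕ) :
    coeff (Finsupp.single (Fin.last m) k) (a * X (Fin.last m) ^ j) =
      if j = k then coeff 0 a else 0 := by
  rw [X_pow_eq, coeff_mul_monomial, mul_one]
  split_ifs with hle hjk hjk
  · rw [hjk, tsub_self]
  · rw [← Finsupp.single_tsub]
    rw [Finsupp.single_le_iff, Finsupp.single_eq_same] at hle
    exact ha _ (by rw [Finsupp.single_eq_same]; omega)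
  · exact absurd (hjk ▸ le_rfl) hle
  · rfl

lemma coe_toAm (g : Polynomial (Aprev F m r)) :
    (toAm F m r g : MvPowerSeries (Fin (m+1)) F) =
      g.eval₂ (Aprev F m r).subtype (X (Fin.last m)) :=
  Polynomial.hom_eval₂ g _ (A F (m+1) r).subtype _

lemma toAm_mul (p q : Polynomial (Aprev F m r)) :
    toAm F m r (p * q) = toAm F m r p * toAm F m r q :=
  Polynomial.eval₂_mul _ _

lemma coeff_single_last_toAm (g : Polynomial (Aprev F m r)) (k : ℕ) :
    coeff (Finsupp.single (Fin.last m) k) (toAm F m r g : MvPowerSeries (Fin (m+1)) F) =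
      coeff 0 (g.coeff k : MvPowerSeries (Fin (m+1)) F) := by
  rw [coe_toAm, Polynomial.eval₂_eq_sum, Polynomial.sum_def, map_sum]
  simp only [Subring.subtype_apply,
    coeff_single_last_mul_X_pow F (Subring.mem_inf.mp (g.coeff _).2).2, Finset.sum_ite_eq']
  split_ifs with hk
  · rfl
  · rw [Polynomial.notMem_support_iff.mp hk, ZeroMemClass.coe_zero, map_zero]

lemma pow_natDegree_le_nrm_toAm {g : Polynomial (Aprev F m r)} (hg : g.Monic) :
    r ^ g.natDegree ≤ nrm F r (toAm F m r g : MvPowerSeries (Fin (m+1)) F) := by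
  have h := gaussTerm_le_nrm F (toAm F m r g).2 (Finsupp.single (Fin.last m) g.natDegree)
  rwa [gaussTerm, coeff_single_last_toAm, hg.coeff_natDegree, Subring.coe_one, coeff_zero_one,
    norm_one, one_mul, mdeg_single] at h

lemma IsWeierstrass.of_mul_left (hr : 0 < r) {g₁ g₂ : Polynomial (Aprev F m r)} (h₁ : g₁.Monic)
    (h₂ : g₂.Monic) (h : IsWeierstrass F m r (g₁ * g₂)) : IsWeierstrass F m r g₁ := by
  have hmul := nrm_mul_nrm_le_nrm_mul F hr (toAm F m r g₁).2 (toAm F m r g₂).2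
  rw [← Subring.coe_mul, ← toAm_mul, h.2, Polynomial.natDegree_mul h₁.ne_zero h₂.ne_zero,
    pow_add] at hmul
  have hle₁ := pow_natDegree_le_nrm_toAm F h₁
  have hle₂ := pow_natDegree_le_nrm_toAm F h₂
  refine ⟨h₁, le_antisymm (le_of_mul_le_mul_right ?_ (pow_pos hr g₂.natDegree)) hle₁⟩
  exact (mul_le_mul_of_nonneg_left hle₂ ((pow_pos hr _).le.trans hle₁)).trans hmul

lemma IsWeierstrass.of_mul_right (hr : 0 < r) {g₁ g₂ : Polynomial (Aprev F m r)} (h₁ : g₁.Monic)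
    (h₂ : g₂.Monic) (h : IsWeierstrass F m r (g₁ * g₂)) : IsWeierstrass F m r g₂ :=
  (mul_comm g₁ g₂ ▸ h).of_mul_left F hr h₂ h₁

end Weierstrass

theorem statement7
    (m : ℕ) (r : ℝ) (hr : r ∈ VG F)
    (f₁ f₂ W : Polynomial (Aprev F m r)) (hW : IsWeierstrass F m r W)
    (hprod : W = f₁ * f₂) :
    ∃ u₁ u₂ : (Aprev F m r)ˣ,
      IsWeierstrass F m r (Polynomial.C ((u₁⁻¹ : (Aprev F m r)ˣ) : Aprev F m r) * f₁) ∧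
      IsWeierstrass F m r (Polynomial.C ((u₂⁻¹ : (Aprev F m r)ˣ) : Aprev F m r) * f₂) := by
  obtain ⟨u, hg₁, hg₂, hfac⟩ := Polynomial.exists_unit_monic_of_monic_mul (hprod ▸ hW.1)
  rw [← hprod] at hfac
  refine ⟨u, u⁻¹, (hfac ▸ hW).of_mul_left F (VG.pos F hr) hg₁ hg₂, ?_⟩
  rw [inv_inv]
  exact (hfac ▸ hW).of_mul_right F (VG.pos F hr) hg₁ hg₂

end NA
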